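/- Let X = (X₁, X₂) ∈ {0,1}² with P(0,0) = P(0,1) = P(1,0) = 1/3 and P(1,1) = 0, and bandwidth k = 1. The deviation heuristic σ^dev reveals, at each instance, one coordinate maximizing |x_i − 1/3| (breaking ties by the smaller index); the greedy information-gain policy σ^greedy reveals the loss-minimizing choice among ∅ and singletons at each instance (choosing ∅ at (0,0) and the coordinate equal to 1 at (0,1) and (1,0)). Their expected naive losses satisfy R^N(σ^dev) = 1/12 and R^N(σ^greedy) = 2/27, and hence R^N(σ^greedy) = 2/27 < 1/12 = R^N(σ^dev). -/

import Mathlib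

/-!
Statement 19: For the correlated prior `P(0,0)=P(0,1)=P(1,0)=1/3`, `P(1,1)=0`
and bandwidth `k = 1`, the deviation heuristic has expected naive loss `1/12`,
the greedy information-gain policy has expected naive loss `2/27`, and
`2/27 < 1/12`.
-/

open Finset
open scoped Classical

noncomputable section

/-- The support of the prior: the three equally likely states. -/
def supp19 : Finset (ℝ × ℝ) := {(0, 0), (0, 1), (1, 0)}

/-- Coordinates of an instance. -/
def coord19 (j : Fin 2) (x : ℝ × ℝ) : ℝ := if j = 0 then x.1 else x.2

/-- Naive conditional mean `E[X_j | X_I = x_I]` under the uniform prior on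
`supp19` (the unconditional mean when `I = ∅`). -/
def condMean19 (I : Finset (Fin 2)) (x : ℝ × ℝ) (j : Fin 2) : ℝ :=
  (∑ y ∈ supp19.filter (fun y => ∀ i ∈ I, coord19 i y = coord19 i x),
      coord19 j y) /
    ((supp19.filter (fun y => ∀ i ∈ I, coord19 i y = coord19 i x)).card : ℝ)

/-- Naive realized loss `L^N(I;x) = Σ_{i∉I}(x_i − E[X_i | X_I = x_I])²`. -/
def LN19 (I : Finset (Fin 2)) (x : ℝ × ℝ) : ℝ :=
  ∑ j ∈ Iᶜ, (coord19 j x - condMean19 I x j) ^ 2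

/-- Expected naive loss of a policy under the uniform prior on the three
support points. -/
def RN19 (pol : ℝ × ℝ → Finset (Fin 2)) : ℝ :=
  (1 / 3) * ∑ x ∈ supp19, LN19 (pol x) x

/-- Deviation heuristic: reveal one coordinate maximizing `|x_i − 1/3|`,
breaking ties in favor of the smaller index. -/
def devPol19 (x : ℝ × ℝ) : Finset (Fin 2) :=
  if |x.2 - 1 / 3| > |x.1 - 1 / 3| then {1} else {0}

/-- Greedy information-gain policy: reveal the loss-minimizing choice among
`∅` and the singletons (`∅` at `(0,0)`, the coordinate equal to `1` at
`(0,1)` and `(1,0)`). -/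
def greedyPol19 (x : ℝ × ℝ) : Finset (Fin 2) :=
  if x = ((0 : ℝ), (0 : ℝ)) then ∅ else if x.1 = 1 then {0} else {1}

/-! Each risk is an average over the three support points. Revealing a coordinate equal to `1`
forces the other one to be `0`, so both policies lose nothing at `(0,1)` and `(1,0)`. At `(0,0)`
the deviation heuristic reveals `X₁ = 0`, leaving `X₂` with conditional mean `1/2` (loss `1/4`),
while the greedy policy reveals nothing and pays `(1/3)² + (1/3)² = 2/9`. -/

lemma condMean19_empty (x : ℝ × ℝ) (j : Fin 2) : condMean19 ∅ x j = 1 / 3 := by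
  fin_cases j <;> norm_num [condMean19, supp19, coord19]

lemma condMean19_zero_of_fst_eq_zero {x : ℝ × ℝ} (hx : x.1 = 0) :
    condMean19 {0} x 1 = 1 / 2 := by
  norm_num [condMean19, supp19, coord19, hx, Finset.filter_insert, Finset.filter_singleton]

lemma condMean19_zero_of_fst_eq_one {x : ℝ × ℝ} (hx : x.1 = 1) :
    condMean19 {0} x 1 = 0 := by
  norm_num [condMean19, supp19, coord19, hx, Finset.filter_insert, Finset.filter_singleton]

lemma condMean19_one_of_snd_eq_one {x : ℝ × ℝ} (hx : x.2 = 1) :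
    condMean19 {1} x 0 = 0 := by
  norm_num [condMean19, supp19, coord19, hx, Finset.filter_insert, Finset.filter_singleton]

lemma LN19_empty (x : ℝ × ℝ) : LN19 ∅ x = (x.1 - 1 / 3) ^ 2 + (x.2 - 1 / 3) ^ 2 := by
  simp [LN19, condMean19_empty, Fin.sum_univ_two, coord19]

lemma LN19_singleton_zero (x : ℝ × ℝ) : LN19 {0} x = (x.2 - condMean19 {0} x 1) ^ 2 := by
  simp [LN19, show ({0} : Finset (Fin 2))ᶜ = {1} by decide, coord19]

lemma LN19_singleton_one (x : ℝ × ℝ) : LN19 {1} x = (x.1 - condMean19 {1} x 0) ^ 2 := by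
  simp [LN19, show ({1} : Finset (Fin 2))ᶜ = {0} by decide, coord19]

lemma RN19_eq_average (pol : ℝ × ℝ → Finset (Fin 2)) :
    RN19 pol = (LN19 (pol (0, 0)) (0, 0) + LN19 (pol (0, 1)) (0, 1) +
      LN19 (pol (1, 0)) (1, 0)) / 3 := by
  rw [RN19, supp19, Finset.sum_insert (by norm_num [Prod.ext_iff]),
    Finset.sum_insert (by norm_num [Prod.ext_iff]), Finset.sum_singleton]
  ring

lemma devPol19_values :
    devPol19 (0, 0) = {0} ∧ devPol19 (0, 1) = {1} ∧ devPol19 (1, 0) = {0} := by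
  norm_num [devPol19, abs_of_nonneg, abs_of_nonpos]

lemma greedyPol19_values :
    greedyPol19 (0, 0) = ∅ ∧ greedyPol19 (0, 1) = {1} ∧ greedyPol19 (1, 0) = {0} := by
  norm_num [greedyPol19, Prod.ext_iff]

theorem stmt_19 :
    RN19 devPol19 = 1 / 12 ∧
    RN19 greedyPol19 = 2 / 27 ∧
    (2 : ℝ) / 27 < 1 / 12 := by
  obtain ⟨dev₀₀, dev₀₁, dev₁₀⟩ := devPol19_values
  obtain ⟨gr₀₀, gr₀₁, gr₁₀⟩ := greedyPol19_values
  have L₀₁ : LN19 {1} (0, 1) = 0 := by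
    rw [LN19_singleton_one, condMean19_one_of_snd_eq_one rfl]; norm_num
  have L₁₀ : LN19 {0} (1, 0) = 0 := by
    rw [LN19_singleton_zero, condMean19_zero_of_fst_eq_one rfl]; norm_num
  refine ⟨?_, ?_, by norm_num⟩
  · rw [RN19_eq_average, dev₀₀, dev₀₁, dev₁₀, L₀₁, L₁₀, LN19_singleton_zero,
      condMean19_zero_of_fst_eq_zero rfl]
    norm_num
  · rw [RN19_eq_average, gr₀₀, gr₀₁, gr₁₀, L₀₁, L₁₀, LN19_empty]
    norm_num

end
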